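/- arXiv:1702.08808 — 4 statements merged into one kernel-verified Lean document; each statement's English description precedes it below -/
import Mathlib

section
/- Let A be a group and let σ : A → A be a group automorphism with σ ∘ σ = id, so that σ defines an action of G = ℤ/2ℤ on A. Call an element b ∈ A a cocycle if b · σ(b) = 1, and say two cocycles b, b' are cohomologous if there exists a ∈ A with b' = a · b · σ(a)⁻¹. If the semidirect product A ⋊ ℤ/2ℤ (formed with respect to the ℤ/2ℤ-action through σ) has only finitely many conjugacy classes of elements of order 2, then the set of cocycles modulo the cohomologous relation is finite (i.e. the nonabelian first Galois cohomology H¹(ℤ/2ℤ, A) is finite). -/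
/-!
A cocycle `b` is the same thing as an element `⟨b, g⟩` of order two lying over the generator `g`
of `ℤ/2ℤ`. Since `⟨b, g⟩` together with `A` generates `A ⋊ ℤ/2ℤ`, every conjugate of it is already a
conjugate by an element `a ∈ A`, namely `⟨a * b * σ a⁻¹, g⟩`. Hence conjugacy classes of such
elements are exactly cohomology classes of cocycles, and finitely many of the former give finitely
many of the latter.
-/

namespace SemidirectProduct

variable {N G : Type*} [Group N] [Group G] {φ : G →* MulAut N}

theorem inl_mul_mul_inv_inl (a : N) (x : N ⋊[φ] G) :
    inl a * x * (inl a)⁻¹ = ⟨a * x.left * φ x.right a⁻¹, x.right⟩ := by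
  ext <;> simp

/-- A conjugator `c` factors as `inl n * x ^ k`, and `x ^ k` commutes with `x`. -/
theorem isConj_iff_exists_inl_conj {x y : N ⋊[φ] G} (hx : ∀ g : G, g ∈ Subgroup.zpowers x.right) :
    IsConj x y ↔ ∃ a : N, inl a * x * (inl a)⁻¹ = y := by
  rw [isConj_iff]
  refine ⟨?_, fun ⟨a, h⟩ => ⟨_, h⟩⟩
  rintro ⟨c, rfl⟩
  obtain ⟨k, hk⟩ := Subgroup.mem_zpowers_iff.1 (hx c.right)
  have hxk : (x ^ k).right = x.right ^ k := map_zpow (rightHom : N ⋊[φ] G →* G) x k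
  have hc : c = inl (c.left * (x ^ k).left⁻¹) * x ^ k := by
    ext <;> simp [hxk, hk]
  have hx_comm : x ^ k * x * (x ^ k)⁻¹ = x :=
    mul_inv_eq_iff_eq_mul.2 ((Commute.refl x).zpow_left k).eq
  refine ⟨c.left * (x ^ k).left⁻¹, ?_⟩
  set d : N ⋊[φ] G := inl (c.left * (x ^ k).left⁻¹)
  calc d * x * d⁻¹ = d * (x ^ k * x * (x ^ k)⁻¹) * d⁻¹ := by rw [hx_comm]
    _ = c * x * c⁻¹ := by rw [hc]; group

theorem mk_ofAdd_one_sq_eq_one_iff {φ : Multiplicative (ZMod 2) →* MulAut N} (b : N) :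
    (⟨b, .ofAdd 1⟩ : N ⋊[φ] Multiplicative (ZMod 2)) ^ 2 = 1 ↔ b * φ (.ofAdd 1) b = 1 := by
  rw [sq, SemidirectProduct.ext_iff]
  simp [show (Multiplicative.ofAdd (1 : ZMod 2)) * .ofAdd 1 = 1 from rfl]

end SemidirectProduct

theorem Multiplicative.mem_zpowers_ofAdd_one_zmod_two (g : Multiplicative (ZMod 2)) :
    g ∈ Subgroup.zpowers (ofAdd 1) := by
  fin_cases g
  exacts [one_mem _, Subgroup.mem_zpowers _]

theorem finite_galois_cohomology_of_finitely_many_order_two_classes_general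
    {A : Type*} [Group A] (σ : MulAut A)
    (φ : Multiplicative (ZMod 2) →* MulAut A)
    (hφ : φ (Multiplicative.ofAdd 1) = σ)
    (hfin : ∃ S : Finset (A ⋊[φ] Multiplicative (ZMod 2)),
      ∀ x : A ⋊[φ] Multiplicative (ZMod 2), x ≠ 1 → x ^ 2 = 1 → ∃ y ∈ S, IsConj y x) :
    ∃ T : Finset A, (∀ b ∈ T, b * σ b = 1) ∧
      ∀ b : A, b * σ b = 1 → ∃ b' ∈ T, ∃ a : A, b = a * b' * (σ a)⁻¹ := by
  classical
  subst hφ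
  obtain ⟨S, hS⟩ := hfin
  refine ⟨(S.image SemidirectProduct.left).filter (fun b => b * φ (.ofAdd 1) b = 1),
    fun b hb => (Finset.mem_filter.1 hb).2, fun b hb => ?_⟩
  have hx_ne : (⟨b, .ofAdd 1⟩ : A ⋊[φ] _) ≠ 1 := fun h => by
    simpa using congrArg SemidirectProduct.right h
  have hx_sq := (SemidirectProduct.mk_ofAdd_one_sq_eq_one_iff (φ := φ) b).2 hb
  obtain ⟨y, hyS, hyx⟩ := hS _ hx_ne hx_sq
  obtain ⟨a, hay⟩ := (SemidirectProduct.isConj_iff_exists_inl_conj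
    Multiplicative.mem_zpowers_ofAdd_one_zmod_two).1 hyx.symm
  have hy_sq : y ^ 2 = 1 := by rw [← hay, conj_pow, hx_sq, mul_one, mul_inv_cancel]
  rw [SemidirectProduct.inl_mul_mul_inv_inl] at hay
  subst hay
  refine ⟨_, Finset.mem_filter.2 ⟨Finset.mem_image_of_mem _ hyS,
    (SemidirectProduct.mk_ofAdd_one_sq_eq_one_iff _).1 hy_sq⟩, a⁻¹, ?_⟩
  simp only [map_inv, inv_inv]
  group

/-- If the semidirect product `A ⋊ ℤ/2ℤ` (with `ℤ/2ℤ` acting through the involution `σ`)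
has only finitely many conjugacy classes of elements of order 2, then the nonabelian
first Galois cohomology `H¹(ℤ/2ℤ, A)` (cocycles `b * σ b = 1` modulo the cohomologous
relation `b' = a * b * (σ a)⁻¹`) is finite. -/
theorem finite_galois_cohomology_of_finitely_many_order_two_classes
    {A : Type*} [Group A] (σ : MulAut A) (hσ : ∀ a : A, σ (σ a) = a)
    (φ : Multiplicative (ZMod 2) →* MulAut A)
    (hφ : φ (Multiplicative.ofAdd 1) = σ)
    (hfin : ∃ S : Finset (A ⋊[φ] Multiplicative (ZMod 2)),
      ∀ x : A ⋊[φ] Multiplicative (ZMod 2), x ≠ 1 → x ^ 2 = 1 → ∃ y ∈ S, IsConj y x) :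
    ∃ T : Finset A, (∀ b ∈ T, b * σ b = 1) ∧
      ∀ b : A, b * σ b = 1 → ∃ b' ∈ T, ∃ a : A, b = a * b' * (σ a)⁻¹ :=
  finite_galois_cohomology_of_finitely_many_order_two_classes_general σ φ hφ hfin
end

section
/- Each of the 12 points of P lies on exactly 3 of the nine lines C₁, …, C₉. Equivalently, for each of the 12 vectors v of P, exactly 3 of the nine linear forms y − ζᵏx, z − ζᵏx, z − ζᵏy (k ∈ {0,1,2}) vanish at v. -/
/-- The 12 points of the dual Hesse configuration, as vectors of `ℂ³`:
the nine points `(1, ζⁱ, ζʲ)` together with the three coordinate points. -/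
def hesseP (ζ : ℂ) : Set (ℂ × ℂ × ℂ) :=
  {v | ∃ i j : Fin 3, v = (1, ζ ^ (i : ℕ), ζ ^ (j : ℕ))} ∪
    {(1, 0, 0), (0, 1, 0), (0, 0, 1)}

/-- The nine linear forms `y - ζᵏx`, `z - ζᵏx`, `z - ζᵏy` (for `k ∈ {0,1,2}`) cutting out
the nine lines `C₁, …, C₉` of the dual Hesse configuration. -/
def hesseForm (ζ : ℂ) (t k : Fin 3) (v : ℂ × ℂ × ℂ) : ℂ :=
  if t = 0 then v.2.1 - ζ ^ (k : ℕ) * v.1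
  else if t = 1 then v.2.2 - ζ ^ (k : ℕ) * v.1
  else v.2.2 - ζ ^ (k : ℕ) * v.2.1
/-!
At an affine point `(1, ζⁱ, ζʲ)` each of the three families of forms vanishes for exactly one
`k`, namely `k = i`, `k = j` and `k = j - i`, because `k ↦ ζᵏ` is injective on `Fin 3` and
turns addition mod 3 into multiplication. At a coordinate point, one family vanishes for every
`k` and the other two for none, since `ζ ≠ 0`.
-/

namespace IsPrimitiveRoot

variable {M : Type*} [CommMonoid M] {ζ : M} {n : ℕ}

theorem pow_fin_val_inj (hζ : IsPrimitiveRoot ζ n) {a b : Fin n} :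
    ζ ^ (a : ℕ) = ζ ^ (b : ℕ) ↔ a = b :=
  ⟨fun h ↦ Fin.ext (hζ.pow_inj a.isLt b.isLt h), fun h ↦ h ▸ rfl⟩

theorem pow_fin_val_add (hζ : IsPrimitiveRoot ζ n) (a b : Fin n) :
    ζ ^ ((a + b : Fin n) : ℕ) = ζ ^ (a : ℕ) * ζ ^ (b : ℕ) := by
  rw [Fin.val_add, ← pow_eq_pow_mod _ hζ.pow_eq_one, pow_add]

end IsPrimitiveRoot

theorem Set.ncard_setOf_snd_eq {α β : Type*} (f : α → β) :
    {p : α × β | p.2 = f p.1}.ncard = Nat.card α := by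
  have hrange : Set.range (fun a ↦ (a, f a)) = {p : α × β | p.2 = f p.1} := by
    ext ⟨a, b⟩
    simp [eq_comm]
  rw [← hrange, Set.ncard_range_of_injective fun a a' h ↦ (Prod.mk.inj h).1]

theorem Set.ncard_setOf_fst_eq {α β : Type*} (a : α) :
    {p : α × β | p.1 = a}.ncard = Nat.card β := by
  have hrange : Set.range (Prod.mk a) = {p : α × β | p.1 = a} := by
    ext ⟨a', b⟩
    simp [eq_comm]
  rw [← hrange, Set.ncard_range_of_injective (Prod.mk_right_injective a)]

section HesseForm

variable {ζ : ℂ}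

theorem hesseForm_eq_zero_iff_of_affine (hζ : IsPrimitiveRoot ζ 3) (i j t k : Fin 3) :
    hesseForm ζ t k (1, ζ ^ (i : ℕ), ζ ^ (j : ℕ)) = 0 ↔ k = ![i, j, j - i] t := by
  fin_cases t <;>
    simp [hesseForm, sub_eq_zero, ← hζ.pow_fin_val_add, hζ.pow_fin_val_inj, eq_comm,
      eq_sub_iff_add_eq]

theorem hesseForm_eq_zero_iff_of_x_axis (hζ : ζ ≠ 0) (t k : Fin 3) :
    hesseForm ζ t k (1, 0, 0) = 0 ↔ t = 2 := by
  fin_cases t <;> simp [hesseForm, hζ]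

theorem hesseForm_eq_zero_iff_of_y_axis (hζ : ζ ≠ 0) (t k : Fin 3) :
    hesseForm ζ t k (0, 1, 0) = 0 ↔ t = 1 := by
  fin_cases t <;> simp [hesseForm, hζ]

theorem hesseForm_eq_zero_iff_of_z_axis (t k : Fin 3) :
    hesseForm ζ t k (0, 0, 1) = 0 ↔ t = 0 := by
  fin_cases t <;> simp [hesseForm]

end HesseForm

/-- Each of the 12 points of `P` lies on exactly 3 of the nine lines `C₁, …, C₉`:
for each vector `v` of `P`, exactly 3 of the nine linear forms vanish at `v`. -/
theorem each_hesse_point_lies_on_exactly_three_lines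
    (ζ : ℂ) (hζ : IsPrimitiveRoot ζ 3) :
    ∀ v ∈ hesseP ζ, {tk : Fin 3 × Fin 3 | hesseForm ζ tk.1 tk.2 v = 0}.ncard = 3 := by
  have hζ0 : ζ ≠ 0 := hζ.ne_zero three_ne_zero
  rintro v (⟨i, j, rfl⟩ | rfl | rfl | rfl)
  · simp_rw [hesseForm_eq_zero_iff_of_affine hζ]
    simpa using Set.ncard_setOf_snd_eq ![i, j, j - i]
  · simp_rw [hesseForm_eq_zero_iff_of_x_axis hζ0]
    simpa using Set.ncard_setOf_fst_eq (β := Fin 3) 2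
  · simp_rw [hesseForm_eq_zero_iff_of_y_axis hζ0]
    simpa using Set.ncard_setOf_fst_eq (β := Fin 3) 1
  · simp_rw [hesseForm_eq_zero_iff_of_z_axis]
    simpa using Set.ncard_setOf_fst_eq (β := Fin 3) 0
end

section
/- There is no line of ℙ²(ℂ) containing at least 11 of the 12 points of P; that is, there is no nonzero linear form on ℂ³ vanishing at 11 or more of the 12 vectors of P. -/
theorem Set.subsingleton_sep_not_of_ncard_le {α : Type*} {s : Set α} (hs : s.Finite)
    {p : α → Prop} (h : s.ncard ≤ {x ∈ s | p x}.ncard + 1) : {x ∈ s | ¬ p x}.Subsingleton := by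
  have hsplit : {x ∈ s | p x}.ncard + {x ∈ s | ¬ p x}.ncard = s.ncard :=
    ncard_inter_add_ncard_sdiff_eq_ncard s {x | p x} hs
  exact (ncard_le_one (hs.sep _)).1 (by omega)

def standardFrame (R : Type*) [Zero R] [One R] : Set (R × R × R) :=
  {(1, 0, 0), (0, 1, 0), (0, 0, 1), (1, 1, 1)}

theorem LinearMap.eq_zero_of_subsingleton_standardFrame_sep_ne_zero {R M : Type*} [Semiring R]
    [Nontrivial R] [AddCommMonoid M] [Module R M] (f : R × R × R →ₗ[R] M)
    (h : {v ∈ standardFrame R | f v ≠ 0}.Subsingleton) : f = 0 := by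
  have pair : ∀ u ∈ standardFrame R, ∀ w ∈ standardFrame R, u ≠ w → f u = 0 ∨ f w = 0 := by
    intro u hu w hw huw
    by_contra! hne
    exact huw (h ⟨hu, hne.1⟩ ⟨hw, hne.2⟩)
  have e₁ : ((1, 0, 0) : R × R × R) ∈ standardFrame R := by simp [standardFrame]
  have e₂ : ((0, 1, 0) : R × R × R) ∈ standardFrame R := by simp [standardFrame]
  have e₃ : ((0, 0, 1) : R × R × R) ∈ standardFrame R := by simp [standardFrame]
  have e₄ : ((1, 1, 1) : R × R × R) ∈ standardFrame R := by simp [standardFrame]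
  have hsum : f (1, 1, 1) = f (1, 0, 0) + f (0, 1, 0) + f (0, 0, 1) := by
    rw [← map_add, ← map_add]
    simp
  have hbasis : f (1, 0, 0) = 0 ∧ f (0, 1, 0) = 0 ∧ f (0, 0, 1) = 0 := by
    have := pair _ e₁ _ e₂ (by simp)
    have := pair _ e₁ _ e₃ (by simp)
    have := pair _ e₂ _ e₃ (by simp)
    have := pair _ e₁ _ e₄ (by simp)
    have := pair _ e₂ _ e₄ (by simp)
    have := pair _ e₃ _ e₄ (by simp)
    grind
  obtain ⟨h₁, h₂, h₃⟩ := hbasis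
  ext
  exacts [h₁, h₂, h₃]

theorem hesseP_eq_coe_finset (ζ : ℂ) :
    hesseP ζ = ↑(Finset.univ.image
      (fun p : Fin 3 × Fin 3 => ((1 : ℂ), ζ ^ (p.1 : ℕ), ζ ^ (p.2 : ℕ))) ∪
        {(1, 0, 0), (0, 1, 0), (0, 0, 1)}) := by
  ext v
  simp [hesseP, eq_comm]

theorem hesseP_finite (ζ : ℂ) : (hesseP ζ).Finite := by
  rw [hesseP_eq_coe_finset]
  exact Finset.finite_toSet _

theorem ncard_hesseP_le (ζ : ℂ) : (hesseP ζ).ncard ≤ 12 := by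
  rw [hesseP_eq_coe_finset, Set.ncard_coe_finset]
  refine (Finset.card_union_le _ _).trans
    (add_le_add (Finset.card_image_le.trans ?_) Finset.card_le_three)
  simp

theorem standardFrame_subset_hesseP (ζ : ℂ) : standardFrame ℂ ⊆ hesseP ζ := by
  rintro v (rfl | rfl | rfl | rfl)
  iterate 3 exact Or.inr (by simp)
  exact Or.inl ⟨0, 0, by simp⟩

theorem no_line_through_eleven_hesse_points_general
    (ζ : ℂ) :
    ¬ ∃ f : (ℂ × ℂ × ℂ) →ₗ[ℂ] ℂ, f ≠ 0 ∧ 11 ≤ {v ∈ hesseP ζ | f v = 0}.ncard := by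
  rintro ⟨f, hf0, hcard⟩
  have hoff : {v ∈ hesseP ζ | f v ≠ 0}.Subsingleton :=
    Set.subsingleton_sep_not_of_ncard_le (hesseP_finite ζ) (by linarith [ncard_hesseP_le ζ])
  exact hf0 (f.eq_zero_of_subsingleton_standardFrame_sep_ne_zero
    (hoff.anti fun v hv => ⟨standardFrame_subset_hesseP ζ hv.1, hv.2⟩))

/-- No line of `ℙ²(ℂ)` contains at least 11 of the 12 points of `P`: there is no nonzero
linear form on `ℂ³` vanishing at 11 or more of the 12 vectors of `P`. -/
theorem no_line_through_eleven_hesse_points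
    (ζ : ℂ) (hζ : IsPrimitiveRoot ζ 3) :
    ¬ ∃ f : (ℂ × ℂ × ℂ) →ₗ[ℂ] ℂ, f ≠ 0 ∧ 11 ≤ {v ∈ hesseP ζ | f v = 0}.ncard :=
  no_line_through_eleven_hesse_points_general ζ
end

section
/- Let ζ ∈ ℂ be a primitive cube root of unity and let N be the central subgroup of GL₂(ℂ) generated by ζ·I₂. Then the subgroup of the quotient group GL₂(ℂ)/N generated by the images of the two matrices [[1,2],[0,1]] and [[1,0],[2,1]] is a nonabelian free group of rank 2; that is, there is an injective group homomorphism from the free group on two generators onto this subgroup sending the two generators to the images of these two matrices. -/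
/-!
Sanov's ping-pong: on the projective line `K ∪ {∞}` over an ordered field, `S` acts by
`t ↦ t + 2` and `T` by `t ↦ t / (2t + 1)`, i.e. by `s ↦ s + 2` in the coordinate `s = 1/t`.
So `S` maps the complement of `Y₀ = {t < -1}` into `X₀ = {t ≥ 1} ∪ {∞}`, and `T` maps the
complement of `Y₁ = {-1 ≤ t ≤ 0}` (`s ≤ -1` or `s = ∞`) into `X₁ = {0 < t < 1}` (`s > 1`); the
inverses then swap the roles of `Xᵢ` and `Yᵢ`. The four regions are disjoint, so by ping-pong
`⟨S, T⟩` is free in `GL₂(ℚ)`, hence in `GL₂(K)` for every field of characteristic zero.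
`S` and `T` have determinant `1`, whereas `det (ζ I)^k = ζ^{2k}` is `1` only when `3 ∣ k`, that is
when `(ζ I)^k = 1`. So `⟨S, T⟩` meets `⟨ζ I⟩` trivially and embeds into the quotient.
-/

open Matrix OnePoint Set Function Pointwise

lemma Set.inv_smul_compl_subset_of_smul_compl_subset {G α : Type*} [Group G] [MulAction G α]
    {g : G} {X Y : Set α} (h : g • Yᶜ ⊆ X) : g⁻¹ • Xᶜ ⊆ Y := by
  rw [Set.smul_set_compl, Set.compl_subset_comm]
  exact Set.smul_set_subset_iff_subset_inv_smul_set.mp h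

lemma Matrix.GeneralLinearGroup.map_injective {n R S : Type*} [Fintype n] [DecidableEq n]
    [CommRing R] [CommRing S] {f : R →+* S} (hf : Injective f) :
    Injective (GeneralLinearGroup.map (n := n) f) := fun A B h =>
  GeneralLinearGroup.ext fun i j => hf (by simpa using congr($h i j))

lemma QuotientGroup.injective_mk'_comp {F G : Type*} [Group F] [Group G] {N : Subgroup G}
    [N.Normal] {φ : F →* G} (hφ : Injective φ) (hN : Disjoint φ.range N) :
    Injective ((QuotientGroup.mk' N).comp φ) := by
  refine (injective_iff_map_eq_one _).2 fun w hw => hφ ?_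
  rw [map_one]
  exact Subgroup.disjoint_def.1 hN ⟨w, rfl⟩ ((QuotientGroup.eq_one_iff _).1 hw)

lemma Matrix.GeneralLinearGroup.disjoint_zpowers_ker_det {n R : Type*} [Fintype n] [DecidableEq n]
    [CommRing R] {ζ : R} {m : ℕ} [NeZero m] (hζ : IsPrimitiveRoot ζ m)
    (hm : (Fintype.card n).Coprime m) {g : GL n R} (hg : (g : Matrix n n R) = ζ • 1) :
    Disjoint (Subgroup.zpowers g) GeneralLinearGroup.det.ker := by
  have hpow (k : ℕ) : ((g ^ k : GL n R) : Matrix n n R) = ζ ^ k • 1 := by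
    simp [Units.val_pow_eq_pow_val, hg, smul_pow]
  have hfin : IsOfFinOrder g :=
    isOfFinOrder_iff_pow_eq_one.2 ⟨m, NeZero.pos m, Units.ext (by simp [hpow, hζ.pow_eq_one])⟩
  rw [Subgroup.disjoint_def]
  intro x hx hdet
  obtain ⟨k, rfl⟩ := (Submonoid.mem_powers_iff _ _).1 (hfin.mem_powers_iff_mem_zpowers.2 hx)
  have hcard_pow : (ζ ^ Fintype.card n) ^ k = 1 := by
    have := congr_arg Units.val (MonoidHom.mem_ker.1 hdet)
    rwa [GeneralLinearGroup.val_det_apply, hpow, det_smul, det_one, mul_one, Units.val_one,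
      ← pow_mul, mul_comm, pow_mul] at this
  have hζk : ζ ^ k = 1 :=
    (hζ.pow_eq_one_iff_dvd k).2 ((hζ.pow_of_coprime _ hm).dvd_of_pow_eq_one k hcard_pow)
  exact Units.ext (by simp [hpow, hζk])

lemma pairwise_disjoint_vecCons_two {α : Type*} {s t : Set α} (h : Disjoint s t) :
    Pairwise (Disjoint on ![s, t]) := by
  intro i j hij
  fin_cases i <;> fin_cases j <;> simp_all [onFun, h.symm]

section MobiusAction

variable {K : Type*} [Field K] [DecidableEq K]

lemma smul_infty_of_eq_upper {S : GL (Fin 2) K}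
    (hS : (S : Matrix (Fin 2) (Fin 2) K) = !![1, 2; 0, 1]) : S • (∞ : OnePoint K) = ∞ := by
  simp [smul_infty_eq_ite, hS]

lemma smul_coe_of_eq_upper {S : GL (Fin 2) K}
    (hS : (S : Matrix (Fin 2) (Fin 2) K) = !![1, 2; 0, 1]) (t : K) :
    S • (t : OnePoint K) = ↑(t + 2) := by
  simp [smul_some_eq_ite, hS]

lemma smul_infty_of_eq_lower {T : GL (Fin 2) K}
    (hT : (T : Matrix (Fin 2) (Fin 2) K) = !![1, 0; 2, 1]) (h2 : (2 : K) ≠ 0) :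
    T • (∞ : OnePoint K) = ↑(2⁻¹ : K) := by
  simp [smul_infty_eq_ite, hT, h2]

lemma smul_coe_of_eq_lower {T : GL (Fin 2) K}
    (hT : (T : Matrix (Fin 2) (Fin 2) K) = !![1, 0; 2, 1]) {t : K} (ht : 2 * t + 1 ≠ 0) :
    T • (t : OnePoint K) = ↑(t / (2 * t + 1)) := by
  simp [smul_some_eq_ite, hT, ht]

end MobiusAction

section PingPong

variable {K : Type} [Field K] [LinearOrder K]

def sanovX : Fin 2 → Set (OnePoint K) :=
  ![insert ∞ (((↑) : K → OnePoint K) '' Ici 1), ((↑) : K → OnePoint K) '' Ioo 0 1]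

def sanovY : Fin 2 → Set (OnePoint K) :=
  ![((↑) : K → OnePoint K) '' Iio (-1), ((↑) : K → OnePoint K) '' Icc (-1) 0]

lemma pairwise_disjoint_sanovX : Pairwise (Disjoint on (sanovX : Fin 2 → Set (OnePoint K))) := by
  refine pairwise_disjoint_vecCons_two ?_
  rw [disjoint_insert_left, disjoint_image_iff coe_injective]
  exact ⟨by simp, Set.disjoint_left.2 fun t h1 h2 => (h2.2.trans_le h1).false⟩

lemma pairwise_disjoint_sanovY : Pairwise (Disjoint on (sanovY : Fin 2 → Set (OnePoint K))) := by
  refine pairwise_disjoint_vecCons_two ?_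
  rw [disjoint_image_iff coe_injective]
  exact Set.disjoint_left.2 fun t h1 h2 => (h1.trans_le h2.1).false

variable [IsStrictOrderedRing K]

lemma sanovX_nonempty (i : Fin 2) : (sanovX i : Set (OnePoint K)).Nonempty := by
  fin_cases i
  · exact ⟨∞, by simp [sanovX]⟩
  · exact ⟨(2⁻¹ : K), mem_image_of_mem _ ⟨by norm_num, by norm_num⟩⟩

lemma sanovX_subset (i : Fin 2) : sanovX i ⊆ insert ∞ (((↑) : K → OnePoint K) '' Ioi 0) := by
  fin_cases i <;> simp only [sanovX]
  · exact insert_subset_insert (image_mono fun t ht => zero_lt_one.trans_le ht)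
  · exact (image_mono Ioo_subset_Ioi_self).trans (subset_insert _ _)

lemma sanovY_subset (i : Fin 2) : sanovY i ⊆ ((↑) : K → OnePoint K) '' Iic 0 := by
  fin_cases i <;> refine image_mono fun t ht => ?_
  · exact (ht.trans (by norm_num)).le
  · exact ht.2

lemma disjoint_sanovX_sanovY (i j : Fin 2) : Disjoint (sanovX i : Set (OnePoint K)) (sanovY j) := by
  refine Disjoint.mono (sanovX_subset i) (sanovY_subset j) ?_
  rw [disjoint_insert_left, disjoint_image_iff coe_injective]
  exact ⟨by simp, (Iic_disjoint_Ioi le_rfl).symm⟩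

lemma smul_compl_sanovY_zero_subset {S : GL (Fin 2) K}
    (hS : (S : Matrix (Fin 2) (Fin 2) K) = !![1, 2; 0, 1]) :
    S • (sanovY 0)ᶜ ⊆ (sanovX 0 : Set (OnePoint K)) := by
  rw [smul_set_subset_iff]
  intro p hp
  cases p with
  | infty =>
    rw [smul_infty_of_eq_upper hS]
    exact mem_insert _ _
  | coe t =>
    have ht : -1 ≤ t := not_lt.1 fun h => hp (mem_image_of_mem _ h)
    rw [smul_coe_of_eq_upper hS]
    exact mem_insert_of_mem _ (mem_image_of_mem _ (show 1 ≤ t + 2 by linarith))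

lemma smul_compl_sanovY_one_subset {T : GL (Fin 2) K}
    (hT : (T : Matrix (Fin 2) (Fin 2) K) = !![1, 0; 2, 1]) :
    T • (sanovY 1)ᶜ ⊆ (sanovX 1 : Set (OnePoint K)) := by
  rw [smul_set_subset_iff]
  intro p hp
  cases p with
  | infty =>
    rw [smul_infty_of_eq_lower hT two_ne_zero]
    exact mem_image_of_mem _ ⟨by norm_num, by norm_num⟩
  | coe t =>
    have ht : t < -1 ∨ 0 < t := by
      by_contra! h
      exact hp (mem_image_of_mem _ h)
    rcases ht with ht | ht
    · have hneg : 2 * t + 1 < 0 := by linarith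
      rw [smul_coe_of_eq_lower hT hneg.ne]
      exact mem_image_of_mem _
        ⟨div_pos_of_neg_of_neg (by linarith) hneg, (div_lt_one_of_neg hneg).2 (by linarith)⟩
    · have hpos : 0 < 2 * t + 1 := by linarith
      rw [smul_coe_of_eq_lower hT hpos.ne']
      exact mem_image_of_mem _ ⟨div_pos ht hpos, (div_lt_one hpos).2 (by linarith)⟩

theorem injective_lift_sanov {S T : GL (Fin 2) K}
    (hS : (S : Matrix (Fin 2) (Fin 2) K) = !![1, 2; 0, 1])
    (hT : (T : Matrix (Fin 2) (Fin 2) K) = !![1, 0; 2, 1]) :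
    Injective (FreeGroup.lift ![S, T]) := by
  have hX : ∀ i, ![S, T] i • (sanovY i)ᶜ ⊆ (sanovX i : Set (OnePoint K)) :=
    Fin.forall_fin_two.2 ⟨smul_compl_sanovY_zero_subset hS, smul_compl_sanovY_one_subset hT⟩
  exact FreeGroup.injective_lift_of_ping_pong ![S, T] sanovX sanovY sanovX_nonempty
    pairwise_disjoint_sanovX pairwise_disjoint_sanovY disjoint_sanovX_sanovY hX fun i => Set.inv_smul_compl_subset_of_smul_compl_subset (hX i)

end PingPong

theorem injective_lift_sanov_of_charZero {K : Type*} [Field K] [CharZero K] {S T : GL (Fin 2) K}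
    (hS : (S : Matrix (Fin 2) (Fin 2) K) = !![1, 2; 0, 1])
    (hT : (T : Matrix (Fin 2) (Fin 2) K) = !![1, 0; 2, 1]) :
    Injective (FreeGroup.lift ![S, T]) := by
  let Sℚ := GeneralLinearGroup.mkOfDetNeZero !![(1 : ℚ), 2; 0, 1] (by simp)
  let Tℚ := GeneralLinearGroup.mkOfDetNeZero !![(1 : ℚ), 0; 2, 1] (by simp)
  have hlift : FreeGroup.lift ![S, T] =
      (GeneralLinearGroup.map (Rat.castHom K)).comp (FreeGroup.lift ![Sℚ, Tℚ]) := by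
    ext i : 1
    fin_cases i <;> ext a b <;> fin_cases a <;> fin_cases b <;> simp [Sℚ, Tℚ, hS, hT]
  rw [hlift]
  exact (GeneralLinearGroup.map_injective (Rat.castHom K).injective).comp
    (injective_lift_sanov rfl rfl)

/-- Let `ζ` be a primitive cube root of unity and `N = ⟨ζ·I₂⟩` the central (hence normal)
subgroup of `GL₂(ℂ)` generated by the scalar matrix `ζ·I₂`. The subgroup of `GL₂(ℂ)/N`
generated by the images of `[[1,2],[0,1]]` and `[[1,0],[2,1]]` is a nonabelian free group
of rank 2: there is an injective homomorphism from the free group on two generators onto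
this subgroup sending the generators to the images of these two matrices. -/
theorem free_group_in_gl2c_mod_zeta_center
    (ζ : ℂ) (hζ : IsPrimitiveRoot ζ 3)
    (g : GL (Fin 2) ℂ)
    (hg : (g : Matrix (Fin 2) (Fin 2) ℂ) = ζ • (1 : Matrix (Fin 2) (Fin 2) ℂ))
    [hN : (Subgroup.zpowers g).Normal]
    (S T : GL (Fin 2) ℂ)
    (hS : (S : Matrix (Fin 2) (Fin 2) ℂ) = !![1, 2; 0, 1])
    (hT : (T : Matrix (Fin 2) (Fin 2) ℂ) = !![1, 0; 2, 1]) :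
    ∃ f : FreeGroup (Fin 2) →* GL (Fin 2) ℂ ⧸ Subgroup.zpowers g,
      Function.Injective f ∧
      f (FreeGroup.of 0) = QuotientGroup.mk' (Subgroup.zpowers g) S ∧
      f (FreeGroup.of 1) = QuotientGroup.mk' (Subgroup.zpowers g) T ∧
      f.range = Subgroup.closure {QuotientGroup.mk' (Subgroup.zpowers g) S,
        QuotientGroup.mk' (Subgroup.zpowers g) T} := by
  have hdet : (FreeGroup.lift ![S, T]).range ≤ GeneralLinearGroup.det.ker := by
    rw [FreeGroup.range_lift_eq_closure, Subgroup.closure_le, range_cons_cons_empty]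
    simp [insert_subset_iff, Units.ext_iff, hS, hT]
  have hdisj : Disjoint (FreeGroup.lift ![S, T]).range (Subgroup.zpowers g) :=
    ((GeneralLinearGroup.disjoint_zpowers_ker_det hζ (by decide) hg).mono_right hdet).symm
  refine ⟨(QuotientGroup.mk' _).comp (FreeGroup.lift ![S, T]),
    QuotientGroup.injective_mk'_comp (injective_lift_sanov_of_charZero hS hT) hdisj,
    by simp, by simp, ?_⟩
  rw [MonoidHom.range_comp, FreeGroup.range_lift_eq_closure, MonoidHom.map_closure,
    range_cons_cons_empty, image_pair]
end
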